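/- Let p ≥ 7 be prime and a ∈ [3,p-3], with a even. Then for all sufficiently large even k with k ≡ 1 (mod p), the unique (up to invertible affine transformations of Z_p) a-subset A minimizing s_k(A) is the interval {0,1,...,a-1}. -/

import Mathlib

/-- `skcount k A`: number of `(k+1)`-tuples of elements of `A` with `x 0 = x 1 + ... + x k`. -/
def skcount {p : ℕ} (k : ℕ) (A : Finset (ZMod p)) : ℕ :=
  ((Fintype.piFinset (fun _ : Fin (k + 1) => A)).filter
    (fun x => x 0 = ∑ i : Fin k, x i.succ)).card

/-- The interval `[a] = {0, 1, ..., a-1}` in `ZMod p`. -/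
def initInterval (p a : ℕ) : Finset (ZMod p) :=
  (Finset.range a).image (fun j : ℕ => (j : ZMod p))

/-!
Write `F_A(t) = ∑_{x ∈ A} e(t x / p)`. Orthogonality of characters gives
`p s_k(A) = ∑_t F_A(t)^k conj F_A(t)`: the term `t = 0` is `|A|^{k+1}`, the others have modulus
`|F_A(t)|^{k+1}`. Among `a`-sets `|F_B(1)|` is maximal exactly on arcs, so with `R = |F_{[a]}(1)|`
there is `ρ < R` with `|F_B(t)| ≤ ρ` unless `t B` is an arc; for `B = [a]` that happens only for
`t = ±1`. When `a` and `k` are even and `k ≡ 1 (mod p)`, both terms `t = ±1` of `[a]` equal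
`-R^{k+1}`, so `p s_k([a]) ≤ a^{k+1} - 2 R^{k+1} + (p - 3) ρ^{k+1}`, while
`p s_k(B) ≥ a^{k+1} - (p - 1) ρ^{k+1}` for every `B` that is not an affine image of `[a]`. For `k`
large the former is smaller, and `k ≡ 1 (mod p)` makes `s_k` invariant under affine maps.
-/

open Finset ZMod
open scoped Real ComplexConjugate

lemma AddChar.map_sum_eq_prod {ι A M : Type*} [AddCommMonoid A] [CommMonoid M]
    (ψ : AddChar A M) (s : Finset ι) (f : ι → A) : ψ (∑ i ∈ s, f i) = ∏ i ∈ s, ψ (f i) := by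
  induction s using Finset.cons_induction with
  | empty => simp
  | cons i s hi ih => rw [sum_cons, prod_cons, AddChar.map_add_eq_mul, ih]

section FourierSum

variable {p : ℕ} [NeZero p]

noncomputable def fourierSum (A : Finset (ZMod p)) (t : ZMod p) : ℂ :=
  ∑ x ∈ A, stdAddChar (t * x)

lemma fourierSum_zero (A : Finset (ZMod p)) : fourierSum A 0 = #A := by
  simp [fourierSum]

lemma fourierSum_neg (A : Finset (ZMod p)) (t : ZMod p) :
    fourierSum A (-t) = conj (fourierSum A t) := by
  simp only [fourierSum, map_sum, ← AddChar.map_neg_eq_conj, neg_mul]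

lemma fourierSum_image_add (A : Finset (ZMod p)) (t η : ZMod p) :
    fourierSum (A.image (· + η)) t = stdAddChar (t * η) * fourierSum A t := by
  rw [fourierSum, sum_image (fun x _ y _ h => add_right_cancel h), fourierSum, mul_sum]
  simp only [mul_add, AddChar.map_add_eq_mul, mul_comm]

lemma norm_fourierSum_image_add (A : Finset (ZMod p)) (t η : ZMod p) :
    ‖fourierSum (A.image (· + η)) t‖ = ‖fourierSum A t‖ := by
  rw [fourierSum_image_add, norm_mul, AddChar.norm_apply, one_mul]

lemma fourierSum_image_mul {t : ZMod p} (ht : IsUnit t) (A : Finset (ZMod p)) :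
    fourierSum (A.image (t * ·)) 1 = fourierSum A t := by
  rw [fourierSum, sum_image (fun x _ y _ h => ht.mul_left_cancel h), fourierSum]
  simp only [one_mul]

theorem natCast_mul_skcount_eq_sum (k : ℕ) (A : Finset (ZMod p)) :
    (p * skcount k A : ℂ) = ∑ t, fourierSum A t ^ k * fourierSum A (-t) := by
  classical
  set c : Fin (k + 1) → ZMod p := Fin.cons (-1) fun _ => 1
  have hprod : ∀ t, fourierSum A t ^ k * fourierSum A (-t) =
      ∏ i, ∑ y ∈ A, stdAddChar (c i * t * y) := by
    intro t
    simp [Fin.prod_univ_succ, c, fourierSum, mul_comm]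
  have hlin : ∀ x : Fin (k + 1) → ZMod p,
      ∑ i, c i * x i = 0 ↔ x 0 = ∑ i : Fin k, x i.succ := by
    intro x
    simp [Fin.sum_univ_succ, c, neg_add_eq_zero]
  calc (p * skcount k A : ℂ)
      = ∑ x ∈ Fintype.piFinset fun _ => A, if ∑ i, c i * x i = 0 then (p : ℂ) else 0 := by
        simp_rw [hlin, ← sum_filter, sum_const, nsmul_eq_mul, skcount, mul_comm]
    _ = ∑ x ∈ Fintype.piFinset fun _ => A, ∑ t, stdAddChar (t * ∑ i, c i * x i) := by
        refine sum_congr rfl fun x _ => ?_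
        rw [AddChar.sum_mulShift _ (isPrimitive_stdAddChar p), ZMod.card]
        push_cast
        rfl
    _ = ∑ t, fourierSum A t ^ k * fourierSum A (-t) := by
        rw [sum_comm]
        refine sum_congr rfl fun t _ => ?_
        rw [hprod, prod_univ_sum]
        refine sum_congr rfl fun x _ => ?_
        rw [mul_sum, AddChar.map_sum_eq_prod]
        simp only [mul_left_comm t, mul_assoc]

end FourierSum

def IsAffineImage {p : ℕ} (A B : Finset (ZMod p)) : Prop :=
  ∃ ξ η : ZMod p, ξ ≠ 0 ∧ A.image (fun x => ξ * x + η) = B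

section Affine

variable {p : ℕ} [Fact p.Prime]

theorem skcount_image_affine {k : ℕ} (hk : (k : ZMod p) = 1) {ξ : ZMod p} (hξ : ξ ≠ 0)
    (η : ZMod p) (A : Finset (ZMod p)) :
    skcount k (A.image (fun x => ξ * x + η)) = skcount k A := by
  have hsum : ∀ x : Fin (k + 1) → ZMod p,
      ∑ i : Fin k, (ξ * x i.succ + η) = ξ * ∑ i : Fin k, x i.succ + η := by
    intro x
    rw [sum_add_distrib, ← mul_sum, sum_const, card_univ, Fintype.card_fin, nsmul_eq_mul, hk,
      one_mul]
  symm
  refine card_nbij' (fun x i => ξ * x i + η) (fun y i => ξ⁻¹ * (y i - η)) ?_ ?_ ?_ ?_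
  · intro x hx
    simp only [mem_coe, mem_filter, Fintype.mem_piFinset] at hx ⊢
    exact ⟨fun i => mem_image_of_mem _ (hx.1 i), by rw [hsum, hx.2]⟩
  · intro y hy
    simp only [mem_coe, mem_filter, Fintype.mem_piFinset] at hy ⊢
    refine ⟨fun i => ?_, ?_⟩
    · obtain ⟨b, hb, hby⟩ := mem_image.mp (hy.1 i)
      rwa [← hby, add_sub_cancel_right, inv_mul_cancel_left₀ hξ]
    · rw [← mul_sum, sum_sub_distrib, hy.2, sum_const, card_univ, Fintype.card_fin,
        nsmul_eq_mul, hk, one_mul]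
  · intro x _
    funext i
    simp [hξ]
  · intro y _
    funext i
    simp [hξ]

end Affine

def IsArc (p a : ℕ) (C : Finset (ZMod p)) : Prop :=
  ∃ η : ZMod p, (initInterval p a).image (· + η) = C

section Arc

variable {p : ℕ}

lemma natCast_injOn_range {a : ℕ} (ha : a ≤ p) :
    Set.InjOn (Nat.cast : ℕ → ZMod p) (range a) := by
  intro i hi j hj h
  simp only [coe_range, Set.mem_Iio] at hi hj
  simpa [ZMod.val_cast_of_lt (hi.trans_le ha), ZMod.val_cast_of_lt (hj.trans_le ha)]
    using congrArg ZMod.val h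

lemma card_initInterval {a : ℕ} (ha : a ≤ p) : #(initInterval p a) = a := by
  rw [initInterval, card_image_of_injOn (natCast_injOn_range ha), card_range]

lemma initInterval_eq_univ [NeZero p] {a : ℕ} (ha : p ≤ a) : initInterval p a = univ :=
  eq_univ_of_forall fun x =>
    mem_image.mpr ⟨x.val, mem_range.mpr ((ZMod.val_lt x).trans_le ha), ZMod.natCast_zmod_val x⟩

lemma natCast_mem_initInterval_iff {a : ℕ} (ha : a ≤ p) (m : ℕ) :
    (m : ZMod p) ∈ initInterval p a ↔ m % p < a := by
  simp only [initInterval, mem_image, mem_range, ZMod.natCast_eq_natCast_iff']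
  constructor
  · rintro ⟨i, hi, h⟩
    rwa [← h, Nat.mod_eq_of_lt (hi.trans_le ha)]
  · exact fun h => ⟨m % p, h, Nat.mod_mod _ _⟩

lemma image_Ioo_intCast (L H : ℤ) :
    (Ioo L H).image (Int.cast : ℤ → ZMod p) =
      (initInterval p (H - L - 1).toNat).image (· + ((L + 1 : ℤ) : ZMod p)) := by
  ext x
  simp only [initInterval, image_image, mem_image, mem_Ioo, mem_range, Function.comp_def]
  constructor
  · rintro ⟨j, ⟨hLj, hjH⟩, rfl⟩
    refine ⟨(j - L - 1).toNat, by omega, ?_⟩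
    rw [← Int.cast_natCast, Int.toNat_of_nonneg (by omega), ← Int.cast_add]
    ring_nf
  · rintro ⟨i, hi, rfl⟩
    exact ⟨L + 1 + i, ⟨by omega, by omega⟩, by push_cast; ring⟩

open Real in
lemma cos_lt_cos_iff_exists_abs_sub_lt {w : ℝ} (hw0 : 0 ≤ w) (hwπ : w ≤ π) (u : ℝ) :
    cos w < cos u ↔ ∃ m : ℤ, |u - 2 * π * m| < w := by
  have hcos : ∀ m : ℤ, cos u = cos |u - 2 * π * m| := fun m => by
    rw [cos_abs, show u - 2 * π * m = u - m * (2 * π) by ring, cos_sub_int_mul_two_pi]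
  constructor
  · intro h
    set m := round (u / (2 * π))
    refine ⟨m, lt_of_not_ge fun hw => h.not_ge ?_⟩
    have hπ : |u - 2 * π * m| ≤ π := by
      have hr := abs_sub_round (u / (2 * π))
      rw [show u - 2 * π * m = 2 * π * (u / (2 * π) - m) by field_simp, abs_mul,
        abs_of_pos two_pi_pos]
      nlinarith [pi_pos]
    rw [hcos m]
    exact cos_le_cos_of_nonneg_of_le_pi hw0 hπ hw
  · rintro ⟨m, hm⟩
    rw [hcos m]
    exact cos_lt_cos_of_nonneg_of_le_pi (abs_nonneg _) hwπ hm

lemma exists_sub_mul_mem_Ioo_iff [NeZero p] (α β : ℝ) (x : ZMod p) :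
    (∃ m : ℤ, α < (x.val : ℝ) - p * m ∧ (x.val : ℝ) - p * m < β) ↔
      x ∈ (Ioo ⌊α⌋ ⌈β⌉).image (Int.cast : ℤ → ZMod p) := by
  simp only [mem_image, mem_Ioo, Int.floor_lt, Int.lt_ceil]
  constructor
  · rintro ⟨m, hα, hβ⟩
    refine ⟨x.val - p * m, ⟨by push_cast; linarith, by push_cast; linarith⟩, ?_⟩
    simp
  · rintro ⟨j, ⟨hα, hβ⟩, rfl⟩
    have hj : (((j : ZMod p).val : ℤ) : ℝ) - p * (-(j / p) : ℤ) = j := by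
      rw [ZMod.val_intCast]
      exact_mod_cast (by linear_combination Int.emod_add_mul_ediv j p)
    exact ⟨-(j / p), by push_cast at hj ⊢; linarith, by push_cast at hj ⊢; linarith⟩

open Real in
theorem exists_filter_lt_cos_eq_image_Ioo [NeZero p] {c : ℝ} (hc₁ : -1 ≤ c) (hc₂ : c ≤ 1) (φ : ℝ) :
    ∃ L H : ℤ, univ.filter (fun x : ZMod p => c < cos (2 * π * x.val / p - φ)) =
      (Ioo L H).image (Int.cast : ℤ → ZMod p) := by
  have hp : (0 : ℝ) < p := by exact_mod_cast NeZero.pos p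
  have hK : 0 < 2 * π / p := div_pos two_pi_pos hp
  set w := arccos c
  refine ⟨⌊(φ - w) / (2 * π / p)⌋, ⌈(φ + w) / (2 * π / p)⌉, ?_⟩
  ext x
  rw [mem_filter, ← exists_sub_mul_mem_Ioo_iff, ← cos_arccos hc₁ hc₂,
    cos_lt_cos_iff_exists_abs_sub_lt (arccos_nonneg c) (arccos_le_pi c)]
  simp only [mem_univ, true_and]
  refine exists_congr fun m => ?_
  rw [show 2 * π * x.val / p - φ - 2 * π * m = 2 * π / p * (x.val - p * m) - φ by
    field_simp; ring, abs_lt, div_lt_iff₀' hK, lt_div_iff₀' hK]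
  constructor <;> rintro ⟨h₁, h₂⟩ <;> constructor <;> linarith

end Arc

section Extremal

open Real

variable {p : ℕ} [NeZero p]

lemma stdAddChar_eq_exp (x : ZMod p) :
    (stdAddChar x : ℂ) = Complex.exp (↑(2 * π * x.val / p) * Complex.I) := by
  rw [stdAddChar_apply, toCircle_apply]
  push_cast
  ring_nf

lemma re_mul_conj_stdAddChar (σ : ℂ) (x : ZMod p) :
    (σ * conj (stdAddChar x)).re = ‖σ‖ * cos (2 * π * x.val / p - σ.arg) := by
  rw [stdAddChar_eq_exp, ← Complex.exp_conj, map_mul, Complex.conj_ofReal, Complex.conj_I,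
    Complex.mul_re, mul_neg, ← neg_mul, ← Complex.ofReal_neg, Complex.exp_ofReal_mul_I_re,
    Complex.exp_ofReal_mul_I_im, cos_neg, sin_neg, cos_sub, ← Complex.norm_mul_cos_arg,
    ← Complex.norm_mul_sin_arg]
  ring

lemma re_mul_conj_neg_of_norm_add_le {σ u : ℂ} (hu : u ≠ 0) (h : ‖σ + u‖ ≤ ‖σ‖) :
    (σ * conj u).re < 0 := by
  have hsq : Complex.normSq (σ + u) ≤ Complex.normSq σ := by
    simp only [Complex.normSq_eq_norm_sq]
    exact pow_le_pow_left₀ (norm_nonneg _) h 2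
  have hu' := Complex.normSq_pos.mpr hu
  rw [Complex.normSq_add] at hsq
  linarith

lemma re_mul_conj_stdAddChar_lt_of_forall_norm_le {C : Finset (ZMod p)}
    (hmax : ∀ B : Finset (ZMod p), #B = #C → ‖fourierSum B 1‖ ≤ ‖fourierSum C 1‖)
    {x y : ZMod p} (hx : x ∈ C) (hy : y ∉ C) :
    (fourierSum C 1 * conj (stdAddChar y)).re < (fourierSum C 1 * conj (stdAddChar x)).re := by
  have hxy : stdAddChar y - stdAddChar x ≠ 0 :=
    sub_ne_zero.mpr fun h => hy (injective_stdAddChar h ▸ hx)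
  have hy' : y ∉ C.erase x := fun h => hy (mem_of_mem_erase h)
  have hsum : fourierSum (insert y (C.erase x)) 1 =
      fourierSum C 1 + (stdAddChar y - stdAddChar x) := by
    simp only [fourierSum, one_mul, sum_insert hy', sum_erase_eq_sub hx]
    ring
  have hcard : #(insert y (C.erase x)) = #C := by
    rw [card_insert_of_notMem hy', card_erase_of_mem hx,
      Nat.sub_add_cancel (card_pos.mpr ⟨x, hx⟩)]
  have h := re_mul_conj_neg_of_norm_add_le hxy (hsum ▸ hmax _ hcard)
  rw [map_sub, mul_sub, Complex.sub_re] at h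
  linarith

/-- The exchange inequality makes `C` a superlevel set of
`x ↦ Re (σ conj e(x)) = ‖σ‖ cos (2π x / p - arg σ)`. -/
theorem isArc_of_forall_norm_fourierSum_le {C : Finset (ZMod p)} (hC : C.Nonempty)
    (hCu : C ≠ univ) (hmax : ∀ B : Finset (ZMod p), #B = #C →
      ‖fourierSum B 1‖ ≤ ‖fourierSum C 1‖) : IsArc p #C C := by
  classical
  set σ := fourierSum C 1
  set θ : ZMod p → ℝ := fun x => 2 * π * x.val / p - σ.arg
  have hexchange : ∀ x ∈ C, ∀ y ∉ C, ‖σ‖ * cos (θ y) < ‖σ‖ * cos (θ x) := fun x hx y hy => by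
    simpa only [re_mul_conj_stdAddChar] using
      re_mul_conj_stdAddChar_lt_of_forall_norm_le hmax hx hy
  obtain ⟨y₀, hy₀, hy₀max⟩ := exists_max_image (univ \ C) (fun y => ‖σ‖ * cos (θ y))
    (sdiff_nonempty.mpr fun h => hCu (univ_subset_iff.mp h))
  rw [mem_sdiff] at hy₀
  obtain ⟨x₀, hx₀⟩ := hC
  have hσ : 0 < ‖σ‖ := by
    by_contra h
    have := hexchange x₀ hx₀ y₀ hy₀.2
    simp_all [le_antisymm (not_lt.mp h) (norm_nonneg σ)]
  have hsuper : univ.filter (fun x => cos (θ y₀) < cos (θ x)) = C := by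
    ext x
    simp only [mem_filter, mem_univ, true_and]
    refine ⟨fun h => ?_, fun hx => (mul_lt_mul_iff_right₀ hσ).mp (hexchange x hx y₀ hy₀.2)⟩
    by_contra hx
    exact (hy₀max x (mem_sdiff.mpr ⟨mem_univ x, hx⟩)).not_gt ((mul_lt_mul_iff_right₀ hσ).mpr h)
  obtain ⟨L, H, hLH⟩ := exists_filter_lt_cos_eq_image_Ioo (p := p) (neg_one_le_cos (θ y₀))
    (cos_le_one (θ y₀)) σ.arg
  rw [hsuper, image_Ioo_intCast] at hLH
  set n := (H - L - 1).toNat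
  have hn : n < p := by
    by_contra hn
    rw [initInterval_eq_univ (not_lt.mp hn), image_univ_of_surjective (add_right_surjective _)]
      at hLH
    exact hCu hLH
  rw [hLH, card_image_of_injective _ (add_left_injective _), card_initInterval hn.le]
  exact ⟨_, rfl⟩

theorem norm_fourierSum_one_lt_of_not_isArc {a : ℕ} (ha : 0 < a) (hap : a < p)
    {B : Finset (ZMod p)} (hB : #B = a) (hBarc : ¬ IsArc p a B) :
    ‖fourierSum B 1‖ < ‖fourierSum (initInterval p a) 1‖ := by
  obtain ⟨C, hC, hCmax⟩ := exists_max_image (powersetCard a (univ : Finset (ZMod p)))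
    (fun B => ‖fourierSum B 1‖) (powersetCard_nonempty.mpr (by simpa using hap.le))
  rw [mem_powersetCard_univ] at hC
  have hmax : ∀ B' : Finset (ZMod p), #B' = a → ‖fourierSum B' 1‖ ≤ ‖fourierSum C 1‖ :=
    fun B' hB' => hCmax B' (mem_powersetCard_univ.mpr hB')
  have hCarc : IsArc p a C := hC ▸ isArc_of_forall_norm_fourierSum_le
    (card_pos.mp (hC ▸ ha)) (fun h => by simp [h] at hC; omega) (hC ▸ hmax)
  obtain ⟨η, hη⟩ := hCarc
  rw [← hη, norm_fourierSum_image_add] at hmax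
  refine (hmax B hB).lt_of_ne fun h => hBarc (hB ▸ isArc_of_forall_norm_fourierSum_le
    (card_pos.mp (hB ▸ ha)) (fun h => by simp [h] at hB; omega)
    fun B' hB' => h ▸ hmax B' (hB'.trans hB))

end Extremal

section Dilates

lemma card_filter_add_mem_image {R : Type*} [AddCommGroup R] [DecidableEq R] {f : R → R}
    (hf : Function.Injective f) {d e : R} (hfde : ∀ x, f (x + d) = f x + e) (S : Finset R) :
    #{y ∈ S.image f | y + e ∈ S.image f} = #{x ∈ S | x + d ∈ S} := by
  rw [filter_image, card_image_of_injective _ hf]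
  simp only [← hfde, hf.mem_finset_image]

variable {p : ℕ}

lemma card_filter_add_mem_initInterval [NeZero p] {a v : ℕ} (ha : a ≤ p) (hv : v < p) :
    #{x ∈ initInterval p a | x + (v : ZMod p) ∈ initInterval p a} = (a - v) + (a - (p - v)) := by
  have hsplit : (range a).filter (fun j : ℕ => (j : ZMod p) + v ∈ initInterval p a) =
      range (a - v) ∪ Ico (p - v) a := by
    ext j
    simp only [mem_filter, mem_range, mem_union, mem_Ico, ← Nat.cast_add,
      natCast_mem_initInterval_iff ha, Nat.add_mod_eq_ite]
    constructor
    · rintro ⟨hj, h⟩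
      rw [Nat.mod_eq_of_lt (hj.trans_le ha), Nat.mod_eq_of_lt hv] at h
      split_ifs at h <;> omega
    · intro h
      refine ⟨by omega, ?_⟩
      rw [Nat.mod_eq_of_lt (by omega : j < p), Nat.mod_eq_of_lt hv]
      split_ifs <;> omega
  unfold initInterval at hsplit ⊢
  rw [filter_image, card_image_of_injOn ((natCast_injOn_range ha).mono (filter_subset _ _)), hsplit,
    card_union_of_disjoint (disjoint_left.mpr fun j h₁ h₂ => by simp at h₁ h₂; omega),
    card_range, Nat.card_Ico]

variable [Fact p.Prime]

/-- If `t • [a]` is an arc, then `a - 1` elements `x ∈ [a]` have `x + t ∈ [a]`; for `[a]` itself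
that count is `(a - t) + (a - (p - t))`, which equals `a - 1` only for `t = ±1`. -/
theorem eq_one_or_eq_neg_one_of_isArc_image_mul {a : ℕ} (ha : 2 ≤ a) (hap : a + 2 ≤ p)
    {t : ZMod p} (ht : t ≠ 0) (harc : IsArc p a ((initInterval p a).image (t * ·))) :
    t = 1 ∨ t = -1 := by
  obtain ⟨η, hη⟩ := harc
  have hcount : #{x ∈ initInterval p a | x + (t.val : ZMod p) ∈ initInterval p a} = a - 1 := by
    rw [ZMod.natCast_zmod_val, ← card_filter_add_mem_image (add_left_injective η)
      (fun x => add_right_comm x t η), hη, card_filter_add_mem_image (mul_right_injective₀ ht)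
      (fun x => mul_add_one t x), ← Nat.cast_one, card_filter_add_mem_initInterval (by omega)
      (by omega)]
    omega
  rw [card_filter_add_mem_initInterval (by omega) (ZMod.val_lt t)] at hcount
  have hv : t.val ≠ 0 := (ZMod.val_ne_zero t).mpr ht
  have : NeZero t := ⟨ht⟩
  rcases (by omega : t.val = 1 ∨ t.val = p - 1) with h | h
  · exact Or.inl (ZMod.val_injective p (h.trans (ZMod.val_one p).symm))
  · refine Or.inr (ZMod.val_injective p ?_)
    have : NeZero (1 : ZMod p) := ⟨one_ne_zero⟩
    rw [h, ZMod.val_neg_of_ne_zero, ZMod.val_one]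

theorem isAffineImage_of_isArc_image_mul {a : ℕ} {t : ZMod p} (ht : t ≠ 0)
    {B : Finset (ZMod p)} (harc : IsArc p a (B.image (t * ·))) :
    IsAffineImage (initInterval p a) B := by
  obtain ⟨η, hη⟩ := harc
  refine ⟨t⁻¹, t⁻¹ * η, inv_ne_zero ht, ?_⟩
  have := congrArg (Finset.image (t⁻¹ * ·)) hη
  simp only [image_image, Function.comp_def, inv_mul_cancel_left₀ ht, image_id'] at this
  rw [← this]
  simp only [mul_add]

end Dilates

section Phase

open Real

lemma sum_range_exp_mul_I {θ : ℝ} (hθ : sin θ ≠ 0) (a : ℕ) :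
    ∑ j ∈ range a, Complex.exp (↑(2 * j * θ) * Complex.I) =
      ↑(sin (a * θ) / sin θ) * Complex.exp (↑((a - 1) * θ) * Complex.I) := by
  set u := Complex.exp (↑θ * Complex.I)
  have hu : u ≠ 0 := Complex.exp_ne_zero _
  have hexp : ∀ n : ℕ, Complex.exp (↑(n * θ) * Complex.I) = u ^ n := fun n => by
    rw [← Complex.exp_nat_mul]; push_cast; ring_nf
  have hsin : ∀ n : ℕ, (sin (n * θ) : ℂ) * (2 * Complex.I) = u ^ n - (u ^ n)⁻¹ := fun n => by
    rw [← hexp, ← Complex.exp_neg, Complex.ofReal_sin, Complex.sin]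
    push_cast
    ring_nf
    rw [Complex.I_sq]
    ring_nf
  have hs1 := hsin 1
  have hsa := hsin a
  simp only [Nat.cast_one, one_mul, pow_one] at hs1
  have hs1' : (sin θ : ℂ) ≠ 0 := Complex.ofReal_ne_zero.mpr hθ
  have hgeom := geom_sum_mul (u ^ 2) a
  have hterm : ∀ j : ℕ, Complex.exp (↑(2 * j * θ) * Complex.I) = (u ^ 2) ^ j := fun j => by
    rw [← pow_mul, ← hexp]; push_cast; ring_nf
  have hlast : Complex.exp (↑((a - 1) * θ) * Complex.I) = u ^ a * u⁻¹ := by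
    rw [← hexp, ← Complex.exp_neg, ← Complex.exp_add]; push_cast; ring_nf
  simp only [hterm, hlast, Complex.ofReal_div]
  rw [div_mul_eq_mul_div, eq_div_iff hs1']
  field_simp at hs1 hsa ⊢
  apply mul_left_cancel₀ (mul_ne_zero two_ne_zero Complex.I_ne_zero)
  linear_combination (∑ j ∈ range a, (u ^ 2) ^ j) * hs1 - hsa + hgeom

lemma exists_odd_eq_mul_add_one {p k : ℕ} (hp : 1 < p) (hk : Even k) (hkp : k ≡ 1 [MOD p]) :
    ∃ m, Odd m ∧ k = p * m + 1 := by
  have hk' : k = p * (k / p) + 1 := by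
    have h₁ := Nat.div_add_mod k p
    have h₂ : k % p = 1 := (show k % p = 1 % p from hkp).trans (Nat.mod_eq_of_lt hp)
    omega
  refine ⟨k / p, Nat.not_even_iff_odd.mp fun hm => ?_, hk'⟩
  rw [hk', Nat.even_add_one] at hk
  exact hk (hm.mul_left p)

lemma sin_pi_div_pos {p : ℕ} (hp : 1 < p) : 0 < sin (π / p) :=
  sin_pos_of_pos_of_lt_pi (div_pos pi_pos (by positivity))
    (div_lt_self pi_pos (by exact_mod_cast hp))

variable {p : ℕ} [NeZero p]

lemma fourierSum_initInterval_one (hp : 1 < p) {a : ℕ} (ha : a ≤ p) :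
    fourierSum (initInterval p a) 1 =
      ↑(sin (a * (π / p)) / sin (π / p)) * Complex.exp (↑((a - 1) * (π / p)) * Complex.I) := by
  rw [fourierSum, initInterval, sum_image (natCast_injOn_range ha),
    ← sum_range_exp_mul_I (sin_pi_div_pos hp).ne']
  refine sum_congr rfl fun j hj => ?_
  rw [one_mul, stdAddChar_eq_exp, ZMod.val_cast_of_lt ((mem_range.mp hj).trans_le ha)]
  ring_nf

lemma norm_fourierSum_initInterval_one (hp : 1 < p) {a : ℕ} (ha : a ≤ p) :
    ‖fourierSum (initInterval p a) 1‖ = sin (a * (π / p)) / sin (π / p) := by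
  have hsin : 0 ≤ sin (a * (π / p)) := sin_nonneg_of_nonneg_of_le_pi (by positivity) <| by
    rw [mul_div_assoc', div_le_iff₀ (by positivity), mul_comm π]
    exact mul_le_mul_of_nonneg_right (by exact_mod_cast ha : (a : ℝ) ≤ p) pi_pos.le
  rw [fourierSum_initInterval_one hp ha, norm_mul, Complex.norm_exp_ofReal_mul_I, mul_one,
    Complex.norm_real, norm_of_nonneg (div_nonneg hsin (sin_pi_div_pos hp).le)]

lemma norm_fourierSum_initInterval_one_pos (hp : 1 < p) {a : ℕ} (ha : 0 < a) (hap : a < p) :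
    0 < ‖fourierSum (initInterval p a) 1‖ := by
  rw [norm_fourierSum_initInterval_one hp hap.le]
  refine div_pos (sin_pos_of_pos_of_lt_pi (by positivity) ?_) (sin_pi_div_pos hp)
  rw [mul_div_assoc', div_lt_iff₀ (by positivity), mul_comm π]
  exact mul_lt_mul_of_pos_right (by exact_mod_cast hap : (a : ℝ) < p) pi_pos

/-- `F = R w` with `R ≥ 0` and `w = exp (i π (a - 1) / p)`, so `F^k conj F = R^{k+1} (w^p)^m` for
`k = p m + 1`; `w^p = -1` as `a - 1` is odd, and `m` is odd as `k` is even. -/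
theorem fourierSum_initInterval_one_pow_mul_conj (hp : 1 < p) {a : ℕ} (ha : a ≤ p)
    (haeven : Even a) {k : ℕ} (hk : Even k) (hkp : k ≡ 1 [MOD p]) :
    fourierSum (initInterval p a) 1 ^ k * conj (fourierSum (initInterval p a) 1) =
      -↑(‖fourierSum (initInterval p a) 1‖ ^ (k + 1)) := by
  obtain ⟨m, hm, rfl⟩ := exists_odd_eq_mul_add_one hp hk hkp
  set w := Complex.exp (↑((a - 1) * (π / p)) * Complex.I)
  have hw : w * conj w = 1 := by
    rw [Complex.mul_conj, Complex.normSq_eq_norm_sq, Complex.norm_exp_ofReal_mul_I]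
    norm_num
  have hwp : w ^ p = -1 := by
    obtain ⟨b, rfl⟩ := haeven
    have hp0 : (p : ℂ) ≠ 0 := Nat.cast_ne_zero.mpr (NeZero.ne p)
    rw [← Complex.exp_nat_mul, show (p : ℂ) * (↑((↑(b + b) - 1) * (π / p)) * Complex.I) =
      b * (2 * π * Complex.I) - π * Complex.I by push_cast; field_simp; ring,
      Complex.exp_sub, Complex.exp_nat_mul_two_pi_mul_I, Complex.exp_pi_mul_I]
    norm_num
  rw [norm_fourierSum_initInterval_one hp ha, fourierSum_initInterval_one hp ha, map_mul,
    Complex.conj_ofReal]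
  calc _ = ↑(sin (a * (π / p)) / sin (π / p)) ^ (p * m + 1 + 1) * (w ^ p) ^ m * (w * conj w) := by
        ring
    _ = _ := by rw [hwp, hw, hm.neg_one_pow]; push_cast; ring

end Phase

section Estimates

open Filter

lemma norm_pow_mul_conj (z : ℂ) (k : ℕ) : ‖z ^ k * conj z‖ = ‖z‖ ^ (k + 1) := by
  rw [norm_mul, norm_pow, Complex.norm_conj, pow_succ]

lemma exists_nonneg_lt_forall_le {α : Type*} [Finite α] {P : α → Prop} {f : α → ℝ} {R : ℝ}
    (hR : 0 < R) (hf : ∀ x, P x → f x < R) : ∃ ρ, 0 ≤ ρ ∧ ρ < R ∧ ∀ x, P x → f x ≤ ρ := by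
  classical
  have := Fintype.ofFinite α
  by_cases h : ∃ x, P x
  · obtain ⟨x₁, hx₁⟩ := h
    obtain ⟨x₀, hx₀, hmax⟩ := exists_max_image (univ.filter P) f ⟨x₁, by simpa using hx₁⟩
    exact ⟨max (f x₀) 0, le_max_right _ _, max_lt (hf x₀ (mem_filter.mp hx₀).2) hR,
      fun x hx => (hmax x (by simpa using hx)).trans (le_max_left _ _)⟩
  · exact ⟨0, le_rfl, hR, fun x hx => (h ⟨x, hx⟩).elim⟩

lemma eventually_mul_pow_lt_pow {ρ R : ℝ} (hρ : 0 ≤ ρ) (hρR : ρ < R) (C : ℝ) :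
    ∀ᶠ n in atTop, C * ρ ^ n < R ^ n := by
  have hR : 0 < R := hρ.trans_lt hρR
  have h := ((tendsto_pow_atTop_nhds_zero_of_lt_one (div_nonneg hρ hR.le)
    ((div_lt_one hR).mpr hρR)).const_mul C).eventually_lt_const (by simp : C * 0 < 1)
  filter_upwards [h] with n hn
  rwa [div_pow, mul_div_assoc', div_lt_one (pow_pos hR n)] at hn

variable {p : ℕ} [NeZero p]

lemma natCast_mul_skcount_eq_card_pow_add (k : ℕ) (A : Finset (ZMod p)) :
    (p * skcount k A : ℝ) = #A ^ (k + 1) +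
      ∑ t ∈ univ.erase 0, (fourierSum A t ^ k * conj (fourierSum A t)).re := by
  have h := congrArg Complex.re (natCast_mul_skcount_eq_sum k A)
  simp only [fourierSum_neg, ← add_sum_erase _ _ (mem_univ (0 : ZMod p)), fourierSum_zero,
    Complex.add_re, Complex.re_sum] at h
  rw [map_natCast, ← pow_succ, ← Nat.cast_pow, ← Nat.cast_mul, Complex.natCast_re,
    Complex.natCast_re] at h
  exact_mod_cast h

theorem card_pow_sub_le_natCast_mul_skcount {k : ℕ} {A : Finset (ZMod p)} {ρ : ℝ}
    (hρ : ∀ t ≠ 0, ‖fourierSum A t‖ ≤ ρ) :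
    (#A : ℝ) ^ (k + 1) - (p - 1) * ρ ^ (k + 1) ≤ p * skcount k A := by
  have hcard : (#(univ.erase (0 : ZMod p)) : ℝ) = p - 1 := by
    rw [card_erase_of_mem (mem_univ _), card_univ, ZMod.card, Nat.cast_pred (NeZero.pos p)]
  have hsum : #(univ.erase (0 : ZMod p)) • -ρ ^ (k + 1) ≤
      ∑ t ∈ univ.erase 0, (fourierSum A t ^ k * conj (fourierSum A t)).re := by
    refine card_nsmul_le_sum _ _ _ fun t ht => neg_le_of_abs_le ?_
    exact (Complex.abs_re_le_norm _).trans ((norm_pow_mul_conj _ _).trans_le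
      (pow_le_pow_left₀ (norm_nonneg _) (hρ t (ne_of_mem_erase ht)) _))
  rw [nsmul_eq_mul, hcard] at hsum
  rw [natCast_mul_skcount_eq_card_pow_add]
  linarith

theorem natCast_mul_skcount_le (hp : 2 < p) {k : ℕ} {A : Finset (ZMod p)} {ρ : ℝ}
    (hρ : ∀ t, t ≠ 0 → t ≠ 1 → t ≠ -1 → ‖fourierSum A t‖ ≤ ρ)
    (hA : fourierSum A 1 ^ k * conj (fourierSum A 1) = -↑(‖fourierSum A 1‖ ^ (k + 1))) :
    p * skcount k A ≤
      (#A : ℝ) ^ (k + 1) - 2 * ‖fourierSum A 1‖ ^ (k + 1) + (p - 3) * ρ ^ (k + 1) := by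
  have : Fact (1 < p) := ⟨by omega⟩
  have : Fact (2 < p) := ⟨hp⟩
  set g : ZMod p → ℝ := fun t => (fourierSum A t ^ k * conj (fourierSum A t)).re
  have hg₁ : g 1 = -‖fourierSum A 1‖ ^ (k + 1) := by
    simp only [g, hA, Complex.neg_re, Complex.ofReal_re]
  have hg₂ : g (-1) = -‖fourierSum A 1‖ ^ (k + 1) := by
    rw [← hg₁]
    simp only [g, fourierSum_neg, Complex.conj_conj, ← map_pow]
    rw [← Complex.conj_re (_ ^ k * _), map_mul, Complex.conj_conj]
  have h₁ : (1 : ZMod p) ∈ univ.erase 0 := mem_erase.mpr ⟨one_ne_zero, mem_univ _⟩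
  have h₂ : (-1 : ZMod p) ∈ (univ.erase 0).erase 1 :=
    mem_erase.mpr ⟨ZMod.neg_one_ne_one, mem_erase.mpr ⟨neg_ne_zero.mpr one_ne_zero, mem_univ _⟩⟩
  have hcard : (#(((univ.erase (0 : ZMod p)).erase 1).erase (-1)) : ℝ) = p - 3 := by
    rw [card_erase_of_mem h₂, card_erase_of_mem h₁, card_erase_of_mem (mem_univ _), card_univ,
      ZMod.card, Nat.sub_sub, Nat.sub_sub, Nat.cast_sub (by omega)]
    norm_num
  have hsum : ∑ t ∈ ((univ.erase (0 : ZMod p)).erase 1).erase (-1), g t ≤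
      #(((univ.erase (0 : ZMod p)).erase 1).erase (-1)) • ρ ^ (k + 1) := by
    refine sum_le_card_nsmul _ _ _ fun t ht => ?_
    simp only [mem_erase] at ht
    exact (Complex.re_le_norm _).trans ((norm_pow_mul_conj _ _).trans_le
      (pow_le_pow_left₀ (norm_nonneg _) (hρ t ht.2.2.1 ht.2.1 ht.1) _))
  rw [nsmul_eq_mul, hcard] at hsum
  rw [natCast_mul_skcount_eq_card_pow_add, ← add_sum_erase _ _ h₁, ← add_sum_erase _ _ h₂]
  change _ + (g 1 + (g (-1) + _)) ≤ _
  rw [hg₁, hg₂]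
  linarith

end Estimates

section Main

variable {p : ℕ} [Fact p.Prime]

theorem exists_norm_fourierSum_le_of_not_isArc {a : ℕ} (ha : 0 < a) (hap : a < p) :
    ∃ ρ, 0 ≤ ρ ∧ ρ < ‖fourierSum (initInterval p a) 1‖ ∧ ∀ (B : Finset (ZMod p)) (t : ZMod p),
      #B = a → t ≠ 0 → ¬ IsArc p a (B.image (t * ·)) → ‖fourierSum B t‖ ≤ ρ := by
  have hlt : ∀ q : Finset (ZMod p) × ZMod p,
      #q.1 = a ∧ q.2 ≠ 0 ∧ ¬ IsArc p a (q.1.image (q.2 * ·)) →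
        ‖fourierSum q.1 q.2‖ < ‖fourierSum (initInterval p a) 1‖ := by
    rintro ⟨B, t⟩ ⟨hB, ht, harc⟩
    rw [← fourierSum_image_mul (Ne.isUnit ht)]
    exact norm_fourierSum_one_lt_of_not_isArc ha hap
      (by rw [card_image_of_injective _ (mul_right_injective₀ ht), hB]) harc
  obtain ⟨ρ, hρ₀, hρR, hρ⟩ := exists_nonneg_lt_forall_le
    (norm_fourierSum_initInterval_one_pos (Fact.out : p.Prime).one_lt ha hap) hlt
  exact ⟨ρ, hρ₀, hρR, fun B t hB ht harc => hρ (B, t) ⟨hB, ht, harc⟩⟩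

theorem exists_forall_skcount_initInterval_lt {a : ℕ} (ha : 2 ≤ a) (hap : a + 2 ≤ p)
    (haeven : Even a) :
    ∃ k₀ : ℕ, ∀ k : ℕ, k₀ ≤ k → Even k → k ≡ 1 [MOD p] → ∀ B : Finset (ZMod p), #B = a →
      ¬ IsAffineImage (initInterval p a) B → skcount k (initInterval p a) < skcount k B := by
  obtain ⟨ρ, hρ₀, hρR, hρ⟩ :=
    exists_norm_fourierSum_le_of_not_isArc (p := p) (a := a) (by omega) (by omega)
  obtain ⟨k₀, hk₀⟩ := Filter.eventually_atTop.mp (eventually_mul_pow_lt_pow hρ₀ hρR p)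
  refine ⟨k₀, fun k hk hkeven hkp B hB hBaff => ?_⟩
  have hI : ∀ t, t ≠ 0 → t ≠ 1 → t ≠ -1 → ‖fourierSum (initInterval p a) t‖ ≤ ρ :=
    fun t ht h₁ h₂ => hρ _ t (card_initInterval (by omega)) ht
      fun harc => (eq_one_or_eq_neg_one_of_isArc_image_mul ha hap ht harc).elim h₁ h₂
  have hB' : ∀ t ≠ 0, ‖fourierSum B t‖ ≤ ρ :=
    fun t ht => hρ B t hB ht fun harc => hBaff (isAffineImage_of_isArc_image_mul ht harc)
  have hlower := card_pow_sub_le_natCast_mul_skcount (k := k) hB'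
  have hupper := natCast_mul_skcount_le (by omega) hI <|
    fourierSum_initInterval_one_pow_mul_conj (Fact.out : p.Prime).one_lt (by omega) haeven
      hkeven hkp
  have hgap := hk₀ (k + 1) (by omega)
  have hρpow := pow_nonneg hρ₀ (k + 1)
  rw [hB] at hlower
  rw [card_initInterval (by omega)] at hupper
  have : (p : ℝ) * skcount k (initInterval p a) < p * skcount k B := by linarith
  exact_mod_cast lt_of_mul_lt_mul_left this (Nat.cast_nonneg p)

end Main

theorem stmt_15_general (p : ℕ) (hp : p.Prime)
    (a : ℕ) (ha : 3 ≤ a) (ha' : a ≤ p - 3) (haeven : Even a) :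
    ∃ k0 : ℕ, ∀ k : ℕ, k0 ≤ k → Even k → k ≡ 1 [MOD p] →
      ∀ A : Finset (ZMod p), A.card = a →
        ((∀ B : Finset (ZMod p), B.card = a → skcount k A ≤ skcount k B) ↔
          ∃ ξ η : ZMod p, ξ ≠ 0 ∧ (initInterval p a).image (fun x => ξ * x + η) = A) := by
  have := Fact.mk hp
  obtain ⟨k₀, hk₀⟩ := exists_forall_skcount_initInterval_lt (p := p) (by omega) (by omega) haeven
  refine ⟨k₀, fun k hk hkeven hkp A hA => ⟨fun hmin => ?_, ?_⟩⟩
  · by_contra hA'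
    exact (hmin _ (card_initInterval (by omega))).not_gt (hk₀ k hk hkeven hkp A hA hA')
  · have hk₁ : (k : ZMod p) = 1 := by simpa using (ZMod.natCast_eq_natCast_iff k 1 p).mpr hkp
    rintro ⟨ξ, η, hξ, rfl⟩ B hB
    rw [skcount_image_affine hk₁ hξ]
    by_cases hB' : IsAffineImage (initInterval p a) B
    · obtain ⟨ξ', η', hξ', rfl⟩ := hB'
      rw [skcount_image_affine hk₁ hξ']
    · exact (hk₀ k hk hkeven hkp B hB hB').le

theorem stmt_15 (p : ℕ) (hp : p.Prime) (hp7 : 7 ≤ p)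
    (a : ℕ) (ha : 3 ≤ a) (ha' : a ≤ p - 3) (haeven : Even a) :
    ∃ k0 : ℕ, ∀ k : ℕ, k0 ≤ k → Even k → k ≡ 1 [MOD p] →
      ∀ A : Finset (ZMod p), A.card = a →
        ((∀ B : Finset (ZMod p), B.card = a → skcount k A ≤ skcount k B) ↔
          ∃ ξ η : ZMod p, ξ ≠ 0 ∧ (initInterval p a).image (fun x => ξ * x + η) = A) :=
  stmt_15_general p hp a ha ha' haeven
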